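/- Let Φ : ℝ^d → [0,∞) be an N_∞ function. Then for every Λ with 0 < Λ < 1 and every y ∈ ℝ^d one has Φ*(∇Φ(y)) ≤ (Λ/(1−Λ)) · Φ(y/Λ), where Φ* is the complementary function of Φ. In particular, the Lagrangian L(t,x,y) = Φ(y) + F(t,x), for any F satisfying conditions (C) and (A), satisfies the structure condition (S) for every Λ < 1. -/

import Mathlib

open MeasureTheory Filter Set
open scoped ENNReal RealInnerProductSpace Topology

noncomputable section

/-- `ℝ^d` with the euclidean norm. -/
abbrev Ed (d : ℕ) : Type := EuclideanSpace ℝ (Fin d)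

/-- `Φ` is an `N_∞` function: differentiable, convex, nonnegative, vanishing exactly at `0`,
even, and superlinear at infinity. -/
def IsNInf {m : ℕ} (Φ : Ed m → ℝ) : Prop :=
  Differentiable ℝ Φ ∧ ConvexOn ℝ Set.univ Φ ∧ (∀ y, 0 ≤ Φ y) ∧ Φ 0 = 0 ∧
    (∀ y, y ≠ 0 → 0 < Φ y) ∧ (∀ y, Φ (-y) = Φ y) ∧
    Tendsto (fun y => Φ y / ‖y‖) (comap (fun y : Ed m => ‖y‖) atTop) atTop

variable {d : ℕ}

/-- The modular `ρ_Φ(u) = ∫_0^T Φ(u(t)) dt`, as an extended nonnegative real. -/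
def rhoE (T : ℝ) (Φ : Ed d → ℝ) (u : ℝ → Ed d) : ℝ≥0∞ :=
  ∫⁻ t in Icc (0:ℝ) T, ENNReal.ofReal (Φ (u t))

/-- `u ∈ L^Φ([0,T], ℝ^d)`. -/
def MemLphi (T : ℝ) (Φ : Ed d → ℝ) (u : ℝ → Ed d) : Prop :=
  AEMeasurable u (volume.restrict (Icc (0:ℝ) T)) ∧
    ∃ l : ℝ, 0 < l ∧ rhoE T Φ (fun t => l • u t) < ⊤

/-- The Luxemburg norm of `u` on `[0,T]`. -/
def luxNorm (T : ℝ) (Φ : Ed d → ℝ) (u : ℝ → Ed d) : ℝ :=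
  sInf {l : ℝ | 0 < l ∧ rhoE T Φ (fun t => l⁻¹ • u t) ≤ 1}

/-- `u ∈ W^1L^Φ([0,T], ℝ^d)` with a.e. derivative `u'` : `u` is absolutely continuous,
being the integral of the (integrable) function `u'`, and `u' ∈ L^Φ`. -/
def MemW1Lphi (T : ℝ) (Φ : Ed d → ℝ) (u u' : ℝ → Ed d) : Prop :=
  IntegrableOn u' (Icc (0:ℝ) T) ∧ MemLphi T Φ u' ∧
    ∀ t ∈ Icc (0:ℝ) T, u t = u 0 + ∫ s in (0:ℝ)..t, u' s

/-- The complementary (conjugate) function `Φ*(ζ) = sup_y (y⬝ζ - Φ(y))`. -/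
def conjFn (Φ : Ed d → ℝ) (z : Ed d) : ℝ := ⨆ y : Ed d, (⟪y, z⟫ - Φ y)

/-- Condition (C): `F` is differentiable in `x` for a.e. `t`, and `F`, `∇ₓF` are
Carathéodory functions. -/
def CondC (T : ℝ) (F : ℝ → Ed d → ℝ) : Prop :=
  (∀ x, Measurable fun t => F t x) ∧ (∀ x, Measurable fun t => gradient (F t) x) ∧
    ∀ᵐ t ∂(volume.restrict (Icc (0:ℝ) T)),
      Differentiable ℝ (F t) ∧ Continuous (F t) ∧ Continuous (gradient (F t))

/-- Condition (A): `|F(t,x)| + |∇ₓF(t,x)| ≤ a(x) b(t)`. -/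
def CondA (T : ℝ) (F : ℝ → Ed d → ℝ) : Prop :=
  ∃ a : Ed d → ℝ, ∃ b : ℝ → ℝ, Continuous a ∧ (∀ x, 0 ≤ a x) ∧
    IntegrableOn b (Icc (0:ℝ) T) ∧ (∀ t, 0 ≤ b t) ∧
    ∀ᵐ t ∂(volume.restrict (Icc (0:ℝ) T)), ∀ x, |F t x| + ‖gradient (F t) x‖ ≤ a x * b t

/-- Condition (B): `Φ*(∇ₓF(t,x)/d(t)) ≤ Φ₀(x) + 1` with `d ∈ L¹`, `d ≥ 1`. -/
def CondB (T : ℝ) (Φ Φ0 : Ed d → ℝ) (F : ℝ → Ed d → ℝ) : Prop :=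
  ∃ dd : ℝ → ℝ, IntegrableOn dd (Icc (0:ℝ) T) ∧ (∀ t, 1 ≤ dd t) ∧
    ∀ᵐ t ∂(volume.restrict (Icc (0:ℝ) T)), ∀ x,
      conjFn Φ ((dd t)⁻¹ • gradient (F t) x) ≤ Φ0 x + 1

/-- The action integral `I(u) = ∫_0^T [Φ(u'(t)) + F(t,u(t))] dt`, valued in `EReal`
(the value `+∞` is allowed, coming from the nonnegative part `∫ Φ(u')`). -/
def actionI (T : ℝ) (Φ : Ed d → ℝ) (F : ℝ → Ed d → ℝ) (u u' : ℝ → Ed d) : EReal :=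
  (rhoE T Φ u').toEReal + ((∫ t in Icc (0:ℝ) T, F t (u t) : ℝ) : EReal)

/-- The Lagrangian `L` is measurable in `t` for each `(x,y)` and continuously
differentiable in `(x,y)` for a.e. `t`. -/
def CaraL (T : ℝ) (L : ℝ → Ed d → Ed d → ℝ) : Prop :=
  (∀ x y, Measurable fun t => L t x y) ∧
    ∀ᵐ t ∂(volume.restrict (Icc (0:ℝ) T)), ContDiff ℝ 1 fun p : Ed d × Ed d => L t p.1 p.2

/-- The structure condition (S). -/
def CondS (T : ℝ) (Φ : Ed d → ℝ) (L : ℝ → Ed d → Ed d → ℝ) (lam Lam : ℝ) : Prop :=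
  ∃ a : Ed d → ℝ, ∃ b : ℝ → ℝ, Continuous a ∧ (∀ x, 0 ≤ a x) ∧
    IntegrableOn b (Icc (0:ℝ) T) ∧ (∀ t, 0 ≤ b t) ∧
    ∀ᵐ t ∂(volume.restrict (Icc (0:ℝ) T)), ∀ x y,
      |L t x y| + ‖gradient (fun x' => L t x' y) x‖ +
          conjFn Φ (lam⁻¹ • gradient (fun y' => L t x y') y) ≤
        a x * (b t + Φ (Lam⁻¹ • y))

/-! The gradient inequality `Φ w ≥ Φ y + ⟪∇Φ(y), w - y⟫` gives the Fenchel–Young bound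
`Φ y + Φ*(∇Φ(y)) ≤ ⟪∇Φ(y), y⟫`, and the same inequality at `w = y/Λ` bounds `⟪∇Φ(y), y⟫` by
`Λ/(1-Λ) (Φ(y/Λ) - Φ y)`. -/

theorem ConvexOn.add_inner_gradient_sub_le {E : Type*} [NormedAddCommGroup E]
    [InnerProductSpace ℝ E] [CompleteSpace E] {s : Set E} {f : E → ℝ} {x y : E}
    (hf : ConvexOn ℝ s f) (hx : x ∈ s) (hy : y ∈ s) (hfx : DifferentiableAt ℝ f x) :
    f x + ⟪gradient f x, y - x⟫ ≤ f y := by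
  have hline : ConvexOn ℝ (Icc 0 1) (fun t : ℝ => f (AffineMap.lineMap x y t)) :=
    (hf.comp_affineMap (AffineMap.lineMap x y)).subset
      (fun _ ht => hf.1.lineMap_mem hx hy ht) (convex_Icc 0 1)
  have hderiv : HasDerivAt (fun t : ℝ => f (AffineMap.lineMap x y t))
      (fderiv ℝ f x (y - x)) 0 := by
    have hf' : HasFDerivAt f (fderiv ℝ f x) (AffineMap.lineMap x y (0 : ℝ)) := by
      simpa using hfx.hasFDerivAt
    exact hf'.comp_hasDerivAt 0 AffineMap.hasDerivAt_lineMap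
  have hslope := hline.le_slope_of_hasDerivAt (left_mem_Icc.2 zero_le_one)
    (right_mem_Icc.2 zero_le_one) one_pos hderiv
  rw [inner_gradient_left]
  simp only [slope_def_field, AffineMap.lineMap_apply_one, AffineMap.lineMap_apply_zero,
    sub_zero, div_one] at hslope
  linarith

theorem inner_gradient_le_of_convexOn {E : Type*} [NormedAddCommGroup E]
    [InnerProductSpace ℝ E] [CompleteSpace E] {f : E → ℝ} (hf : ConvexOn ℝ univ f) {y : E}
    (hfy : DifferentiableAt ℝ f y) {Lam : ℝ} (hL : 0 < Lam) :
    (1 - Lam) * ⟪gradient f y, y⟫ ≤ Lam * (f (Lam⁻¹ • y) - f y) := by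
  have h := hf.add_inner_gradient_sub_le (mem_univ y) (mem_univ (Lam⁻¹ • y)) hfy
  rw [inner_sub_right, real_inner_smul_right] at h
  have hexpand : (1 - Lam) * ⟪gradient f y, y⟫ =
      Lam * (Lam⁻¹ * ⟪gradient f y, y⟫ - ⟪gradient f y, y⟫) := by
    field_simp
  rw [hexpand]
  exact mul_le_mul_of_nonneg_left (by linarith) hL.le

section Conjugate

variable {d : ℕ} {Φ : Ed d → ℝ}

theorem add_conjFn_gradient_le_inner (hΦ : ConvexOn ℝ univ Φ) {y : Ed d}
    (hΦy : DifferentiableAt ℝ Φ y) :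
    Φ y + conjFn Φ (gradient Φ y) ≤ ⟪gradient Φ y, y⟫ := by
  have hsup : conjFn Φ (gradient Φ y) ≤ ⟪gradient Φ y, y⟫ - Φ y := ciSup_le fun w => by
    have h := hΦ.add_inner_gradient_sub_le (mem_univ y) (mem_univ w) hΦy
    rw [inner_sub_right, real_inner_comm] at h
    linarith
  linarith

theorem add_conjFn_gradient_le (hΦ : ConvexOn ℝ univ Φ) {y : Ed d}
    (hΦy : DifferentiableAt ℝ Φ y) (hΦy_nonneg : 0 ≤ Φ y) {Lam : ℝ} (hL : 0 < Lam)
    (hL1 : Lam < 1) :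
    Φ y + conjFn Φ (gradient Φ y) ≤ Lam / (1 - Lam) * Φ (Lam⁻¹ • y) := by
  have h1L : 0 < 1 - Lam := sub_pos.2 hL1
  have hinner : ⟪gradient Φ y, y⟫ ≤ Lam / (1 - Lam) * Φ (Lam⁻¹ • y) := by
    rw [div_mul_eq_mul_div, le_div_iff₀ h1L, mul_comm]
    linarith [inner_gradient_le_of_convexOn hΦ hΦy hL, mul_nonneg hL.le hΦy_nonneg]
  exact (add_conjFn_gradient_le_inner hΦ hΦy).trans hinner

theorem condS_add_of_condA {T : ℝ} {F : ℝ → Ed d → ℝ} {Lam c : ℝ}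
    (hΦ_nonneg : ∀ y, 0 ≤ Φ y) (hc : 0 ≤ c)
    (hΦ : ∀ y, Φ y + conjFn Φ (gradient Φ y) ≤ c * Φ (Lam⁻¹ • y)) (hF : CondA T F) :
    CondS T Φ (fun t x y => Φ y + F t x) 1 Lam := by
  obtain ⟨a, b, ha_cont, ha_nonneg, hb_int, hb_nonneg, hab⟩ := hF
  refine ⟨fun x => a x + c, b, ha_cont.add continuous_const,
    fun x => add_nonneg (ha_nonneg x) hc, hb_int, hb_nonneg, ?_⟩
  filter_upwards [hab] with t habt x y
  have hgrad_x : gradient (fun x' => Φ y + F t x') x = gradient (F t) x := by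
    simp only [gradient, fderiv_const_add]
  have hgrad_y : gradient (fun y' => Φ y' + F t x) y = gradient Φ y := by
    simp only [gradient, fderiv_add_const]
  rw [hgrad_x, hgrad_y, inv_one, one_smul]
  have habs : |Φ y + F t x| ≤ Φ y + |F t x| :=
    (abs_add_le _ _).trans_eq (by rw [abs_of_nonneg (hΦ_nonneg y)])
  have hcross : 0 ≤ a x * Φ (Lam⁻¹ • y) + c * b t :=
    add_nonneg (mul_nonneg (ha_nonneg x) (hΦ_nonneg _)) (mul_nonneg hc (hb_nonneg t))
  linarith [habt x, hΦ y]

end Conjugate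

/-- For every `0 < Λ < 1` and every `y`,
`Φ*(∇Φ(y)) ≤ (Λ/(1−Λ)) Φ(y/Λ)`; in particular, the Lagrangian
`L(t,x,y) = Φ(y) + F(t,x)` satisfies the structure condition (S) (with `λ = 1`) for
every `Λ < 1`, whenever `F` satisfies (C) and (A). -/
theorem statement19 {d : ℕ} (Φ : Ed d → ℝ) (hΦ : IsNInf Φ) :
    (∀ Lam : ℝ, 0 < Lam → Lam < 1 → ∀ y : Ed d,
      conjFn Φ (gradient Φ y) ≤ Lam / (1 - Lam) * Φ (Lam⁻¹ • y)) ∧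
    ∀ T : ℝ, 0 < T → ∀ F : ℝ → Ed d → ℝ, CondC T F → CondA T F →
      ∀ Lam : ℝ, 0 < Lam → Lam < 1 →
        CondS T Φ (fun t x y => Φ y + F t x) 1 Lam := by
  obtain ⟨hdiff, hconv, hnonneg, -⟩ := hΦ
  have key : ∀ Lam : ℝ, 0 < Lam → Lam < 1 → ∀ y : Ed d,
      Φ y + conjFn Φ (gradient Φ y) ≤ Lam / (1 - Lam) * Φ (Lam⁻¹ • y) :=
    fun Lam hL hL1 y => add_conjFn_gradient_le hconv (hdiff y) (hnonneg y) hL hL1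
  refine ⟨fun Lam hL hL1 y => (le_add_of_nonneg_left (hnonneg y)).trans (key Lam hL hL1 y), ?_⟩
  intro T _ F _ hF Lam hL hL1
  exact condS_add_of_condA hnonneg (div_nonneg hL.le (sub_pos.2 hL1).le) (key Lam hL hL1) hF
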